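/- arXiv:1510.01873 — 2 statements merged into one kernel-verified Lean document; each statement's English description precedes it below -/
import Mathlib

section
/- Let H be a real Hilbert space, A⁻¹ : H → H a bounded self-adjoint positive operator with (A⁻¹w, w) ≥ γ‖A⁻¹w‖² for all w ∈ H (a Poincaré-type coercivity), and f : H → H Lipschitz with constant L < γ. Then for any g ∈ H there is at most one u ∈ H satisfying u = A⁻¹f(u) + g. -/
open RealInnerProductSpace

theorem stmt_6 {H : Type*} [NormedAddCommGroup H] [InnerProductSpace ℝ H] [CompleteSpace H]
    (T : H →L[ℝ] H) (hsa : ∀ x y : H, ⟪T x, y⟫ = ⟪x, T y⟫)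
    (γ : ℝ) (hγ : 0 < γ) (hcoer : ∀ w : H, γ * ‖T w‖ ^ 2 ≤ ⟪T w, w⟫)
    (f : H → H) (L : ℝ) (hL : 0 < L) (hLγ : L < γ)
    (hf : ∀ x y : H, ‖f x - f y‖ ≤ L * ‖x - y‖)
    (g : H) (u v : H) (hu : u = T (f u) + g) (hv : v = T (f v) + g) :
    u = v := by
  set w := f u - f v with hw
  have hTw : u - v = T w := by
    conv_lhs => rw [hu, hv]
    rw [hw, map_sub]
    abel
  have h1 : γ * ‖T w‖ ^ 2 ≤ ⟪T w, w⟫ := hcoer w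
  have h2 : ⟪T w, w⟫ ≤ ‖T w‖ * ‖w‖ := real_inner_le_norm _ _
  have h3 : ‖w‖ ≤ L * ‖u - v‖ := hf u v
  have h4 : ‖T w‖ * ‖w‖ ≤ ‖T w‖ * (L * ‖T w‖) := by
    apply mul_le_mul_of_nonneg_left _ (norm_nonneg _)
    rw [hTw] at h3; exact h3
  have h5 : γ * ‖T w‖ ^ 2 ≤ L * ‖T w‖ ^ 2 := by nlinarith
  have hsq : ‖T w‖ ^ 2 = 0 := le_antisymm (by nlinarith) (sq_nonneg _)
  have h6 : ‖T w‖ = 0 := pow_eq_zero_iff (by norm_num) |>.mp hsq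
  have : u - v = 0 := by rw [hTw]; exact norm_eq_zero.mp h6
  exact sub_eq_zero.mp this
end

section
/- In a real Hilbert space H with inner product (·,·), suppose u, w, g ∈ H satisfy the identity u − w = A⁻¹(F(u) − F(w)) + g, where A⁻¹ is self-adjoint positive with (A⁻¹v, v) ≥ γ‖A⁻¹v‖² and F is L-Lipschitz, 0 < L < γ. Then −L‖u−w‖² ≤ −γ‖A⁻¹(F(u)−F(w))‖² + ‖g‖·‖F(u)−F(w)‖. -/
open RealInnerProductSpace

theorem stmt_12 {H : Type*} [NormedAddCommGroup H] [InnerProductSpace ℝ H] [CompleteSpace H]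
    (T : H →L[ℝ] H) (hsa : ∀ x y : H, ⟪T x, y⟫ = ⟪x, T y⟫)
    (γ : ℝ) (hγ : 0 < γ) (hcoer : ∀ v : H, γ * ‖T v‖ ^ 2 ≤ ⟪T v, v⟫)
    (F : H → H) (L : ℝ) (hL : 0 < L) (hLγ : L < γ)
    (hF : ∀ x y : H, ‖F x - F y‖ ≤ L * ‖x - y‖)
    (u w g : H) (huw : u - w = T (F u - F w) + g) :
    -(L * ‖u - w‖ ^ 2) ≤ -(γ * ‖T (F u - F w)‖ ^ 2) + ‖g‖ * ‖F u - F w‖ := by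
  set v := F u - F w with hv
  have hTv : T v = (u - w) - g := by rw [huw]; abel
  have h1 : γ * ‖T v‖ ^ 2 ≤ ⟪T v, v⟫ := hcoer v
  have h2 : ⟪T v, v⟫ = ⟪u - w, v⟫ - ⟪g, v⟫ := by rw [hTv, inner_sub_left]
  have h3 : ⟪u - w, v⟫ ≤ ‖u - w‖ * ‖v‖ := real_inner_le_norm _ _
  have h4 : -⟪g, v⟫ ≤ ‖g‖ * ‖v‖ := by
    have := abs_real_inner_le_norm g v
    cases abs_cases ⟪g, v⟫ with
    | inl h => linarith
    | inr h => linarith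
  have h5 : ‖v‖ ≤ L * ‖u - w‖ := hF u w
  have h6 : ‖u - w‖ * ‖v‖ ≤ L * ‖u - w‖ ^ 2 := by
    nlinarith [norm_nonneg (u - w), norm_nonneg v]
  linarith
end
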